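/- Let Ω be a bounded, connected, convex subset of ℝⁿ (not necessarily open). There exists a constant C > 0, depending only on Ω and n, such that for every function φ smooth on an open, bounded set Ω' ⊃ closure(Ω), ∫_Ω |φ(x) − Ave(φ)|² dx ≤ C ∫_Ω |∇φ|² dx. (Local Poincaré inequality on bounded convex sets.) -/

import Mathlib

open MeasureTheory Filter Topology Complex
open scoped ENNReal
set_option maxHeartbeats 1000000
noncomputable section

/-- Euclidean space ℝⁿ. -/
abbrev Euc (n : ℕ) : Type := EuclideanSpace ℝ (Fin n)

/-- Squared pointwise norm of the gradient of a ℂ-valued function,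
`|∇φ(x)|² = Σᵢ |∂ᵢφ(x)|²`, expressed via the (real) Fréchet derivative `A = Dφ(x)`. -/
def gradNormSq {n : ℕ} (A : Euc n →L[ℝ] ℂ) : ℝ :=
  ∑ i : Fin n, Complex.normSq (A (EuclideanSpace.single i 1))

lemma gradNormSq_nonneg {n : ℕ} (A : Euc n →L[ℝ] ℂ) : 0 ≤ gradNormSq A :=
  Finset.sum_nonneg fun _ _ => Complex.normSq_nonneg _

lemma contgradNormSq {n : ℕ} : Continuous fun A : Euc n →L[ℝ] ℂ => gradNormSq A := by
  apply continuous_finset_sum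
  intro i _
  exact Complex.continuous_normSq.comp
    (ContinuousLinearMap.apply ℝ ℂ (EuclideanSpace.single i 1)).continuous

lemma euc_sum_single {n : ℕ} (v : Euc n) :
    v = ∑ i : Fin n, v i • EuclideanSpace.single i (1 : ℝ) := by
  ext j
  rw [WithLp.ofLp_sum, Finset.sum_apply]
  simp [EuclideanSpace.single_apply]

lemma norm_apply_sq_le {n : ℕ} (A : Euc n →L[ℝ] ℂ) (v : Euc n) :
    ‖A v‖ ^ 2 ≤ gradNormSq A * ‖v‖ ^ 2 := by
  have h1 : ‖A v‖ ≤ ∑ i : Fin n, |v i| * ‖A (EuclideanSpace.single i 1)‖ := by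
    calc ‖A v‖ = ‖∑ i : Fin n, v i • A (EuclideanSpace.single i 1)‖ := by
          conv_lhs => rw [euc_sum_single v]
          rw [map_sum]
          simp [ContinuousLinearMap.map_smul]
      _ ≤ ∑ i : Fin n, ‖v i • A (EuclideanSpace.single i 1)‖ := norm_sum_le _ _
      _ = ∑ i : Fin n, |v i| * ‖A (EuclideanSpace.single i 1)‖ := by
          simp [norm_smul, Real.norm_eq_abs]
  have h2 : (∑ i : Fin n, |v i| * ‖A (EuclideanSpace.single i 1)‖) ^ 2
      ≤ (∑ i : Fin n, |v i| ^ 2) * ∑ i : Fin n, ‖A (EuclideanSpace.single i 1)‖ ^ 2 :=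
    Finset.sum_mul_sq_le_sq_mul_sq _ _ _
  have h3 : (∑ i : Fin n, |v i| ^ 2) = ‖v‖ ^ 2 := by
    rw [EuclideanSpace.norm_eq]
    rw [Real.sq_sqrt (by positivity)]
    simp [sq_abs]
  have h4 : (∑ i : Fin n, ‖A (EuclideanSpace.single i 1)‖ ^ 2) = gradNormSq A := by
    unfold gradNormSq
    refine Finset.sum_congr rfl fun i _ => ?_
    rw [← Complex.sq_norm]
  calc ‖A v‖ ^ 2 ≤ (∑ i : Fin n, |v i| * ‖A (EuclideanSpace.single i 1)‖) ^ 2 := by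
        apply pow_le_pow_left₀ (norm_nonneg _) h1
    _ ≤ (∑ i : Fin n, |v i| ^ 2) * ∑ i : Fin n, ‖A (EuclideanSpace.single i 1)‖ ^ 2 := h2
    _ = gradNormSq A * ‖v‖ ^ 2 := by rw [h3, h4]; ring

lemma sq_average_le {α : Type*} [MeasurableSpace α] {μ : Measure α} [IsFiniteMeasure μ]
    [NeZero μ] {f : α → ℝ} (h1 : Integrable f μ) (h2 : Integrable (fun x => f x ^ 2) μ) :
    (⨍ x, f x ∂μ) ^ 2 ≤ ⨍ x, f x ^ 2 ∂μ :=
  (Even.convexOn_pow even_two).map_average_le (continuous_pow 2).continuousOn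
    isClosed_univ (Eventually.of_forall fun _ => Set.mem_univ _) h1 h2

lemma norm_average_le' {α : Type*} [MeasurableSpace α] {μ : Measure α} {f : α → ℂ} :
    ‖⨍ x, f x ∂μ‖ ≤ ⨍ x, ‖f x‖ ∂μ := by
  unfold MeasureTheory.average
  exact norm_integral_le_integral_norm f

lemma sq_norm_average_le {α : Type*} [MeasurableSpace α] {μ : Measure α} [IsFiniteMeasure μ]
    [NeZero μ] {f : α → ℂ} (h1 : Integrable f μ) (h2 : Integrable (fun x => ‖f x‖ ^ 2) μ) :
    ‖⨍ x, f x ∂μ‖ ^ 2 ≤ ⨍ x, ‖f x‖ ^ 2 ∂μ := by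
  have h : ‖⨍ x, f x ∂μ‖ ^ 2 ≤ (⨍ x, ‖f x‖ ∂μ) ^ 2 :=
    pow_le_pow_left₀ (norm_nonneg _) norm_average_le' 2
  exact h.trans (sq_average_le h1.norm (by simpa using h2))

lemma subst_lemma {n : ℕ} {K : Set (Euc n)} (hKm : MeasurableSet K) (hKconv : Convex ℝ K)
    (g : Euc n → ℝ≥0∞) {a : ℝ} (ha : 1/2 ≤ a) (ha1 : a ≤ 1) {b : Euc n} (hb : b ∈ K) :
    ∫⁻ z in K, g (a • z + (1 - a) • b) ≤ 2 ^ n * ∫⁻ z in K, g z := by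
  have ha0 : (0:ℝ) < a := lt_of_lt_of_le (by norm_num) ha
  set f : Euc n → Euc n := fun z => a • z + (1 - a) • b with hf
  have hf' : ∀ z ∈ K, HasFDerivWithinAt f (a • ContinuousLinearMap.id ℝ (Euc n)) K z := by
    intro z _
    exact (((hasFDerivAt_id z).const_smul a).add_const ((1 - a) • b)).hasFDerivWithinAt
  have hinj : Set.InjOn f K := by
    intro z1 _ z2 _ h
    have h' : a • z1 = a • z2 := by
      have := h; simp only [hf] at this
      exact add_right_cancel this
    exact smul_right_injective _ ha0.ne' h'
  have hdet : (a • ContinuousLinearMap.id ℝ (Euc n)).det = a ^ n := by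
    rw [ContinuousLinearMap.det]
    have h : (↑(a • ContinuousLinearMap.id ℝ (Euc n)) : Euc n →ₗ[ℝ] Euc n)
        = a • (LinearMap.id : Euc n →ₗ[ℝ] Euc n) := by
      ext v; simp
    rw [h, LinearMap.det_smul, finrank_euclideanSpace_fin, LinearMap.det_id, mul_one]
  have himg : f '' K ⊆ K := by
    rintro - ⟨z, hz, rfl⟩
    exact hKconv hz hb (le_of_lt ha0) (by linarith) (by ring)
  have key := lintegral_image_eq_lintegral_abs_det_fderiv_mul volume hKm hf' hinj g
  simp only [hdet, abs_of_pos (pow_pos ha0 n)] at key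
  have hconst : ∫⁻ z in K, ENNReal.ofReal (a ^ n) * g (f z)
      = ENNReal.ofReal (a ^ n) * ∫⁻ z in K, g (f z) :=
    lintegral_const_mul' _ _ ENNReal.ofReal_ne_top
  have hle : ENNReal.ofReal (a ^ n) * ∫⁻ z in K, g (f z) ≤ ∫⁻ z in K, g z := by
    rw [← hconst, ← key]
    exact lintegral_mono_set himg
  have h1 : (1 : ℝ≥0∞) ≤ 2 ^ n * ENNReal.ofReal (a ^ n) := by
    have hmono : ENNReal.ofReal ((1/2 : ℝ) ^ n) ≤ ENNReal.ofReal (a ^ n) :=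
      ENNReal.ofReal_le_ofReal (pow_le_pow_left₀ (by norm_num) ha n)
    calc (1 : ℝ≥0∞) = ENNReal.ofReal ((2:ℝ) ^ n * (1/2 : ℝ) ^ n) := by
          rw [← mul_pow]; norm_num
      _ = ENNReal.ofReal ((2:ℝ) ^ n) * ENNReal.ofReal ((1/2:ℝ) ^ n) := by
          rw [ENNReal.ofReal_mul (by positivity)]
      _ ≤ ENNReal.ofReal ((2:ℝ) ^ n) * ENNReal.ofReal (a ^ n) := mul_le_mul_right hmono _
      _ = 2 ^ n * ENNReal.ofReal (a ^ n) := by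
          rw [ENNReal.ofReal_pow (by norm_num)]; norm_num
  calc ∫⁻ z in K, g (f z) = 1 * ∫⁻ z in K, g (f z) := (one_mul _).symm
    _ ≤ (2 ^ n * ENNReal.ofReal (a ^ n)) * ∫⁻ z in K, g (f z) := mul_le_mul_left h1 _
    _ = 2 ^ n * (ENNReal.ofReal (a ^ n) * ∫⁻ z in K, g (f z)) := by ring
    _ ≤ 2 ^ n * ∫⁻ z in K, g z := mul_le_mul_right hle _

lemma ftc_bound {n : ℕ} {Ω' : Set (Euc n)} (hO : IsOpen Ω') {φ : Euc n → ℂ}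
    (hφ : ContDiffOn ℝ (⊤ : ℕ∞) φ Ω') {K : Set (Euc n)} (hKconv : Convex ℝ K) (hKsub : K ⊆ Ω')
    (hKb : Bornology.IsBounded K) {x y : Euc n} (hx : x ∈ K) (hy : y ∈ K) :
    ENNReal.ofReal (‖φ y - φ x‖ ^ 2)
      ≤ ENNReal.ofReal ((Metric.diam K) ^ 2) *
        ∫⁻ t in Set.Ioc (0:ℝ) 1, ENNReal.ofReal (gradNormSq (fderiv ℝ φ (x + t • (y - x)))) := by
  set c : ℝ → Euc n := fun t => x + t • (y - x) with hc
  have hmem : ∀ t ∈ Set.Icc (0:ℝ) 1, c t ∈ K := fun t ht => hKconv.add_smul_sub_mem hx hy ht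
  have hccont : Continuous c := continuous_const.add (continuous_id.smul continuous_const)
  have hfderivc : ContinuousOn (fderiv ℝ φ) Ω' :=
    hφ.continuousOn_fderiv_of_isOpen hO (by simp)
  have hdcont : ContinuousOn (fun t => (fderiv ℝ φ (c t)) (y - x)) (Set.Icc 0 1) := by
    apply (ContinuousLinearMap.apply ℝ ℂ (y - x)).continuous.comp_continuousOn
    exact hfderivc.comp hccont.continuousOn fun t ht => hKsub (hmem t ht)
  have hGcont : ContinuousOn (fun t => gradNormSq (fderiv ℝ φ (c t))) (Set.Icc 0 1) :=
    contgradNormSq.comp_continuousOn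
      (hfderivc.comp hccont.continuousOn fun t ht => hKsub (hmem t ht))
  have hderiv : ∀ t ∈ Set.uIcc (0:ℝ) 1,
      HasDerivAt (fun s => φ (c s)) ((fderiv ℝ φ (c t)) (y - x)) t := by
    intro t ht
    rw [Set.uIcc_of_le zero_le_one] at ht
    have hφ' : HasFDerivAt φ (fderiv ℝ φ (c t)) (c t) := by
      have hdiff : DifferentiableAt ℝ φ (c t) :=
        (hφ.contDiffAt (hO.mem_nhds (hKsub (hmem t ht)))).differentiableAt (by simp)
      exact hdiff.hasFDerivAt
    have hcd : HasDerivAt c (y - x) t := by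
      simpa [hc] using ((hasDerivAt_id t).smul_const (y - x)).const_add x
    exact hφ'.comp_hasDerivAt t hcd
  have hII : IntervalIntegrable (fun t => (fderiv ℝ φ (c t)) (y - x)) volume 0 1 := by
    apply ContinuousOn.intervalIntegrable
    rwa [Set.uIcc_of_le zero_le_one]
  have hftc : φ y - φ x = ∫ t in (0:ℝ)..1, (fderiv ℝ φ (c t)) (y - x) := by
    have heq := intervalIntegral.integral_eq_sub_of_hasDerivAt hderiv hII
    have h0 : c 0 = x := by simp [hc]
    have h1 : c 1 = y := by simp [hc]
    rw [heq, h0, h1]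
  have hnorm : ‖φ y - φ x‖ ≤ ∫ t in Set.Ioc (0:ℝ) 1, ‖(fderiv ℝ φ (c t)) (y - x)‖ := by
    rw [hftc, ← intervalIntegral.integral_of_le zero_le_one]
    exact intervalIntegral.norm_integral_le_integral_norm zero_le_one
  haveI : IsProbabilityMeasure (volume.restrict (Set.Ioc (0:ℝ) 1)) :=
    ⟨by simp [Real.volume_Ioc]⟩
  have havg : ∀ g : ℝ → ℝ, (⨍ t in Set.Ioc (0:ℝ) 1, g t) = ∫ t in Set.Ioc (0:ℝ) 1, g t :=
    fun g => average_eq_integral _ _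
  have hint1 : IntegrableOn (fun t => ‖(fderiv ℝ φ (c t)) (y - x)‖) (Set.Ioc (0:ℝ) 1) :=
    (hdcont.norm.integrableOn_compact isCompact_Icc).mono_set Set.Ioc_subset_Icc_self
  have hint2 : IntegrableOn (fun t => ‖(fderiv ℝ φ (c t)) (y - x)‖ ^ 2) (Set.Ioc (0:ℝ) 1) :=
    ((hdcont.norm.pow 2).integrableOn_compact isCompact_Icc).mono_set Set.Ioc_subset_Icc_self
  have hintG : IntegrableOn (fun t => gradNormSq (fderiv ℝ φ (c t))) (Set.Ioc (0:ℝ) 1) :=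
    (hGcont.integrableOn_compact isCompact_Icc).mono_set Set.Ioc_subset_Icc_self
  have hjensen : (∫ t in Set.Ioc (0:ℝ) 1, ‖(fderiv ℝ φ (c t)) (y - x)‖) ^ 2
      ≤ ∫ t in Set.Ioc (0:ℝ) 1, ‖(fderiv ℝ φ (c t)) (y - x)‖ ^ 2 := by
    rw [← havg, ← havg]
    exact sq_average_le hint1 hint2
  have hd : ∀ t ∈ Set.Ioc (0:ℝ) 1, ‖(fderiv ℝ φ (c t)) (y - x)‖ ^ 2
      ≤ (Metric.diam K) ^ 2 * gradNormSq (fderiv ℝ φ (c t)) := by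
    intro t _
    have h1 := norm_apply_sq_le (fderiv ℝ φ (c t)) (y - x)
    have h2 : ‖y - x‖ ≤ Metric.diam K := by
      rw [← dist_eq_norm]
      exact Metric.dist_le_diam_of_mem hKb hy hx
    have h3 : ‖y - x‖ ^ 2 ≤ (Metric.diam K) ^ 2 :=
      pow_le_pow_left₀ (norm_nonneg _) h2 2
    calc ‖(fderiv ℝ φ (c t)) (y - x)‖ ^ 2 ≤ gradNormSq (fderiv ℝ φ (c t)) * ‖y - x‖ ^ 2 := h1
      _ ≤ gradNormSq (fderiv ℝ φ (c t)) * (Metric.diam K) ^ 2 :=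
          mul_le_mul_of_nonneg_left h3 (gradNormSq_nonneg _)
      _ = (Metric.diam K) ^ 2 * gradNormSq (fderiv ℝ φ (c t)) := mul_comm _ _
  have hreal : ‖φ y - φ x‖ ^ 2
      ≤ (Metric.diam K) ^ 2 * ∫ t in Set.Ioc (0:ℝ) 1, gradNormSq (fderiv ℝ φ (c t)) := by
    calc ‖φ y - φ x‖ ^ 2 ≤ (∫ t in Set.Ioc (0:ℝ) 1, ‖(fderiv ℝ φ (c t)) (y - x)‖) ^ 2 :=
          pow_le_pow_left₀ (norm_nonneg _) hnorm 2
      _ ≤ ∫ t in Set.Ioc (0:ℝ) 1, ‖(fderiv ℝ φ (c t)) (y - x)‖ ^ 2 := hjensen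
      _ ≤ ∫ t in Set.Ioc (0:ℝ) 1, (Metric.diam K) ^ 2 * gradNormSq (fderiv ℝ φ (c t)) :=
          setIntegral_mono_on hint2 (hintG.const_mul _) measurableSet_Ioc hd
      _ = (Metric.diam K) ^ 2 * ∫ t in Set.Ioc (0:ℝ) 1, gradNormSq (fderiv ℝ φ (c t)) :=
          integral_const_mul _ _
  calc ENNReal.ofReal (‖φ y - φ x‖ ^ 2)
      ≤ ENNReal.ofReal ((Metric.diam K) ^ 2 *
          ∫ t in Set.Ioc (0:ℝ) 1, gradNormSq (fderiv ℝ φ (c t))) :=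
        ENNReal.ofReal_le_ofReal hreal
    _ = ENNReal.ofReal ((Metric.diam K) ^ 2) *
          ENNReal.ofReal (∫ t in Set.Ioc (0:ℝ) 1, gradNormSq (fderiv ℝ φ (c t))) :=
        ENNReal.ofReal_mul (sq_nonneg _)
    _ = ENNReal.ofReal ((Metric.diam K) ^ 2) *
          ∫⁻ t in Set.Ioc (0:ℝ) 1, ENNReal.ofReal (gradNormSq (fderiv ℝ φ (c t))) := by
        rw [ofReal_integral_eq_lintegral_ofReal hintG
          (Eventually.of_forall fun t => gradNormSq_nonneg _)]
lemma comb1 {n : ℕ} (x y : Euc n) (t : ℝ) :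
    x + t • (y - x) = (1 - t) • x + (1 - (1 - t)) • y := by
  rw [smul_sub, sub_smul, one_smul]
  simp only [sub_sub_cancel]
  abel

lemma comb2 {n : ℕ} (x y : Euc n) (t : ℝ) :
    x + t • (y - x) = t • y + (1 - t) • x := by
  rw [smul_sub, sub_smul, one_smul]
  abel

/-- Proposition 3.1, local Poincaré inequality. Let `Ω` be a bounded,
connected, convex subset of `ℝⁿ` (not necessarily open). There is a constant `C > 0`,
depending only on `Ω` and `n`, such that for every `φ` smooth on an open, bounded set
`Ω' ⊇ closure Ω`, `∫_Ω |φ(x) - Ave(φ)|² dx ≤ C ∫_Ω |∇φ|² dx`, where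
`Ave(φ) = (1/V) ∫_Ω φ dx` is the average of `φ` over `Ω`. -/
theorem local_poincare_inequality {n : ℕ}
    (Ω : Set (Euc n))
    (hbdd : Bornology.IsBounded Ω) (hconn : IsConnected Ω) (hconv : Convex ℝ Ω) :
    ∃ C : ℝ, 0 < C ∧
      ∀ Ω' : Set (Euc n), IsOpen Ω' → Bornology.IsBounded Ω' → closure Ω ⊆ Ω' →
        ∀ φ : Euc n → ℂ, ContDiffOn ℝ (⊤ : ℕ∞) φ Ω' →
          (∫ x in Ω, ‖φ x - ⨍ y in Ω, φ y‖ ^ 2)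
            ≤ C * ∫ x in Ω, gradNormSq (fderiv ℝ φ x) := by
    classical
  set K : Set (Euc n) := closure Ω with hK
  have hKconv : Convex ℝ K := hconv.closure
  have hKb : Bornology.IsBounded K := hbdd.closure
  have hKcomp : IsCompact K := hbdd.isCompact_closure
  have hKmeas : MeasurableSet K := isClosed_closure.measurableSet
  have hres : volume.restrict Ω = volume.restrict K := by
    apply Measure.restrict_congr_set
    rw [MeasureTheory.ae_eq_set]
    constructor
    · simp [hK, Set.diff_eq_empty.2 subset_closure]
    · refine measure_mono_null ?_ (hconv.addHaar_frontier volume)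
      intro z hz
      exact ⟨hz.1, fun hzi => hz.2 (interior_subset hzi)⟩
  set d : ℝ := Metric.diam K with hd
  refine ⟨2 ^ n * d ^ 2 + 1, by positivity, ?_⟩
  intro Ω' hO hObdd hsub φ hφ
  have hKsub : K ⊆ Ω' := hsub
  rw [hres]
  by_cases hV0 : volume K = 0
  · rw [Measure.restrict_eq_zero.2 hV0]
    simp
  -- main case
  have hVtop : volume K ≠ ⊤ := hKcomp.measure_lt_top.ne
  set V : ℝ≥0∞ := volume K with hV
  haveI hfin : IsFiniteMeasure (volume.restrict K) :=
    ⟨by rw [Measure.restrict_apply_univ]; exact hKcomp.measure_lt_top⟩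
  haveI hnz : NeZero (volume.restrict K) := ⟨by
    rw [Ne, Measure.restrict_eq_zero]; exact hV0⟩
  have hφc : ContinuousOn φ K := (hφ.continuousOn).mono hKsub
  have hφint : IntegrableOn φ K := hφc.integrableOn_compact hKcomp
  set G : Euc n → ℝ := fun x => gradNormSq (fderiv ℝ φ x) with hG
  have hfderivc : ContinuousOn (fderiv ℝ φ) Ω' := hφ.continuousOn_fderiv_of_isOpen hO (by simp)
  have hGcont : ContinuousOn G K := contgradNormSq.comp_continuousOn (hfderivc.mono hKsub)
  have hGnn : ∀ x, 0 ≤ G x := fun x => gradNormSq_nonneg _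
  have hGint : IntegrableOn G K := hGcont.integrableOn_compact hKcomp
  have hGm : Measurable G :=
    contgradNormSq.measurable.comp (measurable_fderiv ℝ φ)
  set g : Euc n → ℝ≥0∞ := fun z => ENNReal.ofReal (G z) with hg
  have hgm : Measurable g := ENNReal.measurable_ofReal.comp hGm
  set ℰ : ℝ≥0∞ := ∫⁻ z in K, g z with hℰ
  have hℰtop : ℰ ≠ ⊤ := by
    have h := hGint.2
    rw [HasFiniteIntegral] at h
    refine (lt_of_le_of_lt (lintegral_mono fun z => ?_) h).ne
    exact le_of_eq (Real.enorm_eq_ofReal (hGnn z)).symm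
  set A : ℂ := ⨍ y in K, φ y with hA
  set T : Set ℝ := Set.Ioc (0:ℝ) 1 with hT
  -- pointwise average bound
  have havgbd : ∀ x ∈ K, ‖φ x - A‖ ^ 2 ≤ (V.toReal)⁻¹ * ∫ y in K, ‖φ x - φ y‖ ^ 2 := by
    intro x hx
    have hintf : Integrable (fun y => φ x - φ y) (volume.restrict K) :=
      (integrable_const _).sub hφint
    have hintn2 : Integrable (fun y => ‖φ x - φ y‖ ^ 2) (volume.restrict K) :=
      ((continuousOn_const.sub hφc).norm.pow 2).integrableOn_compact hKcomp
    have hsub' : φ x - A = ⨍ y in K, (φ x - φ y) := by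
      have hVuniv : (volume.restrict K) Set.univ = V := Measure.restrict_apply_univ K
      haveI hprob : IsProbabilityMeasure (V⁻¹ • volume.restrict K) := by
        constructor
        rw [Measure.smul_apply, hVuniv, smul_eq_mul, ENNReal.inv_mul_cancel hV0 hVtop]
      rw [hA, average_eq', average_eq', hVuniv]
      rw [integral_sub (integrable_const _) (hφint.smul_measure (ENNReal.inv_ne_top.2 hV0))]
      simp
    rw [hsub']
    have := sq_norm_average_le hintf hintn2
    refine this.trans ?_
    rw [average_eq, measureReal_def, Measure.restrict_apply_univ, smul_eq_mul]
  -- ENNReal chain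
  have hIxy : ∀ x, IntegrableOn (fun y => ‖φ x - φ y‖ ^ 2) K :=
    fun x => ((continuousOn_const.sub hφc).norm.pow 2).integrableOn_compact hKcomp
  have hVinv : ENNReal.ofReal (V.toReal)⁻¹ = V⁻¹ := by
    rw [ENNReal.ofReal_inv_of_pos (ENNReal.toReal_pos hV0 hVtop), ENNReal.ofReal_toReal hVtop]
  have E1 : (∫⁻ x in K, ENNReal.ofReal (‖φ x - A‖ ^ 2))
      ≤ V⁻¹ * ∫⁻ x in K, ∫⁻ y in K, ENNReal.ofReal (‖φ x - φ y‖ ^ 2) := by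
    rw [← lintegral_const_mul' _ _ (ENNReal.inv_ne_top.2 hV0)]
    apply lintegral_mono_ae
    refine (ae_restrict_iff' hKmeas).2 (Eventually.of_forall fun x hx => ?_)
    calc ENNReal.ofReal (‖φ x - A‖ ^ 2)
        ≤ ENNReal.ofReal ((V.toReal)⁻¹ * ∫ y in K, ‖φ x - φ y‖ ^ 2) :=
          ENNReal.ofReal_le_ofReal (havgbd x hx)
      _ = ENNReal.ofReal (V.toReal)⁻¹ * ENNReal.ofReal (∫ y in K, ‖φ x - φ y‖ ^ 2) :=
          ENNReal.ofReal_mul (by positivity)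
      _ = V⁻¹ * ∫⁻ y in K, ENNReal.ofReal (‖φ x - φ y‖ ^ 2) := by
          rw [hVinv, ofReal_integral_eq_lintegral_ofReal (hIxy x)
            (Eventually.of_forall fun y => by positivity)]
  set Q : ℝ≥0∞ := ∫⁻ x in K, ∫⁻ y in K, ∫⁻ t in T, g (x + t • (y - x)) with hQ
  have E2 : (∫⁻ x in K, ∫⁻ y in K, ENNReal.ofReal (‖φ x - φ y‖ ^ 2))
      ≤ ENNReal.ofReal (d ^ 2) * Q := by
    rw [hQ, ← lintegral_const_mul' _ _ ENNReal.ofReal_ne_top]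
    apply lintegral_mono_ae
    refine (ae_restrict_iff' hKmeas).2 (Eventually.of_forall fun x hx => ?_)
    rw [← lintegral_const_mul' _ _ ENNReal.ofReal_ne_top]
    apply lintegral_mono_ae
    refine (ae_restrict_iff' hKmeas).2 (Eventually.of_forall fun y hy => ?_)
    rw [norm_sub_rev]
    exact ftc_bound hO hφ hKconv hKsub hKb hx hy
  -- Tonelli / change of variables
  have hm3 : ∀ x : Euc n, Measurable fun p : Euc n × ℝ => g (x + p.2 • (p.1 - x)) := by
    intro x
    apply hgm.comp
    exact (continuous_const.add (continuous_snd.smul (continuous_fst.sub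
      continuous_const))).measurable
  have hm4 : Measurable fun q : (Euc n × ℝ) × Euc n => g (q.1.1 + q.1.2 • (q.2 - q.1.1)) := by
    apply hgm.comp
    exact (continuous_fst.fst.add (continuous_fst.snd.smul (continuous_snd.sub
      continuous_fst.fst))).measurable
  have hm5 : ∀ t : ℝ, Measurable fun p : Euc n × Euc n => g (p.1 + t • (p.2 - p.1)) := by
    intro t
    apply hgm.comp
    exact (show Continuous fun p : Euc n × Euc n => p.1 + t • (p.2 - p.1) from
      continuous_fst.add ((continuous_snd.sub
      continuous_fst).const_smul t)).measurable
  have swapA : ∀ x : Euc n, (∫⁻ y in K, ∫⁻ t in T, g (x + t • (y - x)))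
      = ∫⁻ t in T, ∫⁻ y in K, g (x + t • (y - x)) := by
    intro x
    exact lintegral_lintegral_swap (hm3 x).aemeasurable
  have swapB : (∫⁻ x in K, ∫⁻ t in T, ∫⁻ y in K, g (x + t • (y - x)))
      = ∫⁻ t in T, ∫⁻ x in K, ∫⁻ y in K, g (x + t • (y - x)) := by
    apply lintegral_lintegral_swap
    exact (Measurable.lintegral_prod_right' hm4).aemeasurable
  have swapC : ∀ t : ℝ, (∫⁻ x in K, ∫⁻ y in K, g (x + t • (y - x)))
      = ∫⁻ y in K, ∫⁻ x in K, g (x + t • (y - x)) := by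
    intro t
    exact lintegral_lintegral_swap ((hm5 t).aemeasurable)
  have hbound : ∀ t ∈ T, (∫⁻ x in K, ∫⁻ y in K, g (x + t • (y - x))) ≤ 2 ^ n * ℰ * V := by
    intro t ht
    obtain ⟨ht0, ht1⟩ := ht
    rcases le_total t (1/2) with hcase | hcase
    · rw [swapC t]
      have inner : ∀ y ∈ K, (∫⁻ x in K, g (x + t • (y - x))) ≤ 2 ^ n * ℰ := by
        intro y hy
        have hcongr : (∫⁻ x in K, g (x + t • (y - x)))
            = ∫⁻ x in K, g ((1 - t) • x + (1 - (1 - t)) • y) :=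
          lintegral_congr fun x => by rw [comb1]
        rw [hcongr]
        exact subst_lemma hKmeas hKconv g (by linarith) (by linarith) hy
      calc (∫⁻ y in K, ∫⁻ x in K, g (x + t • (y - x))) ≤ ∫⁻ _ in K, 2 ^ n * ℰ := by
            apply lintegral_mono_ae
            exact (ae_restrict_iff' hKmeas).2 (Eventually.of_forall inner)
        _ = 2 ^ n * ℰ * V := setLIntegral_const K _
    · have inner : ∀ x ∈ K, (∫⁻ y in K, g (x + t • (y - x))) ≤ 2 ^ n * ℰ := by
        intro x hx
        have hcongr : (∫⁻ y in K, g (x + t • (y - x)))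
            = ∫⁻ y in K, g (t • y + (1 - t) • x) :=
          lintegral_congr fun y => by rw [comb2]
        rw [hcongr]
        exact subst_lemma hKmeas hKconv g hcase ht1 hx
      calc (∫⁻ x in K, ∫⁻ y in K, g (x + t • (y - x))) ≤ ∫⁻ _ in K, 2 ^ n * ℰ := by
            apply lintegral_mono_ae
            exact (ae_restrict_iff' hKmeas).2 (Eventually.of_forall inner)
        _ = 2 ^ n * ℰ * V := setLIntegral_const K _
  have E3 : Q ≤ 2 ^ n * ℰ * V := by
    have hQ' : Q = ∫⁻ t in T, ∫⁻ x in K, ∫⁻ y in K, g (x + t • (y - x)) := by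
      rw [hQ, ← swapB]
      exact lintegral_congr fun x => swapA x
    rw [hQ']
    calc (∫⁻ t in T, ∫⁻ x in K, ∫⁻ y in K, g (x + t • (y - x)))
        ≤ ∫⁻ _ in T, 2 ^ n * ℰ * V := by
          apply lintegral_mono_ae
          exact (ae_restrict_iff' measurableSet_Ioc).2 (Eventually.of_forall hbound)
      _ = (2 ^ n * ℰ * V) * volume T := setLIntegral_const T _
      _ = 2 ^ n * ℰ * V := by rw [hT, Real.volume_Ioc]; simp
  -- combine
  have Etot : (∫⁻ x in K, ENNReal.ofReal (‖φ x - A‖ ^ 2))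
      ≤ ENNReal.ofReal (d ^ 2) * 2 ^ n * ℰ := by
    refine E1.trans ?_
    refine (mul_le_mul_right (E2.trans (mul_le_mul_right E3 _)) _).trans ?_
    have : V⁻¹ * (ENNReal.ofReal (d ^ 2) * (2 ^ n * ℰ * V))
        = (V⁻¹ * V) * (ENNReal.ofReal (d ^ 2) * 2 ^ n * ℰ) := by ring
    rw [this, ENNReal.inv_mul_cancel hV0 hVtop, one_mul]
  -- back to real integrals
  have hFsm : AEStronglyMeasurable (fun x => ‖φ x - A‖ ^ 2) (volume.restrict K) :=
    (((hφc.sub continuousOn_const).norm.pow 2).aestronglyMeasurable hKmeas)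
  have hL : (∫ x in K, ‖φ x - A‖ ^ 2)
      = (∫⁻ x in K, ENNReal.ofReal (‖φ x - A‖ ^ 2)).toReal := by
    rw [integral_eq_lintegral_of_nonneg_ae (Eventually.of_forall fun x => by positivity) hFsm]
  have hR : (∫ x in K, G x) = ℰ.toReal := by
    rw [hℰ]
    rw [integral_eq_lintegral_of_nonneg_ae (Eventually.of_forall fun x => hGnn x)
      (hGcont.aestronglyMeasurable hKmeas)]
  have hRHStop : ENNReal.ofReal (d ^ 2) * 2 ^ n * ℰ ≠ ⊤ := by
    apply ENNReal.mul_ne_top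
    · exact ENNReal.mul_ne_top ENNReal.ofReal_ne_top (by simp)
    · exact hℰtop
  have hfinal : (∫ x in K, ‖φ x - A‖ ^ 2) ≤ d ^ 2 * 2 ^ n * (∫ x in K, G x) := by
    rw [hL, hR]
    calc (∫⁻ x in K, ENNReal.ofReal (‖φ x - A‖ ^ 2)).toReal
        ≤ (ENNReal.ofReal (d ^ 2) * 2 ^ n * ℰ).toReal := ENNReal.toReal_mono hRHStop Etot
      _ = d ^ 2 * 2 ^ n * ℰ.toReal := by
          rw [ENNReal.toReal_mul, ENNReal.toReal_mul, ENNReal.toReal_ofReal (sq_nonneg _)]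
          simp
  have hGint0 : 0 ≤ ∫ x in K, G x := integral_nonneg fun x => hGnn x
  calc (∫ x in K, ‖φ x - A‖ ^ 2) ≤ d ^ 2 * 2 ^ n * (∫ x in K, G x) := hfinal
    _ ≤ (2 ^ n * d ^ 2 + 1) * ∫ x in K, G x := by nlinarith [sq_nonneg d]
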